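/- arXiv:math/0607635 — 2 statements merged into one kernel-verified Lean document; each statement's English description precedes it below -/
import Mathlib

section
/- The function ω(x) defined on [0,2] by the parametric equations x = (2/π)(sin θ − θ cos θ), y = x + 2cos θ, θ ∈ [0, π], is strictly decreasing on [0, 2], with ω(0) = 2 and ω(2) = 0. -/
/-- The `x`-coordinate of the parametrization of the limit shape. -/
noncomputable def curveX (θ : ℝ) : ℝ := (2 / Real.pi) * (Real.sin θ - θ * Real.cos θ)

/-- The `y`-coordinate of the parametrization: `y(θ) = x(θ) + 2 cos θ`. -/
noncomputable def curveY (θ : ℝ) : ℝ := curveX θ + 2 * Real.cos θ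

lemma curveX_hasDeriv (θ : ℝ) :
    HasDerivAt curveX ((2 / Real.pi) * (θ * Real.sin θ)) θ := by
  have h1 : HasDerivAt (fun t : ℝ => Real.sin t - t * Real.cos t) (θ * Real.sin θ) θ := by
    have h := (Real.hasDerivAt_sin θ).sub ((hasDerivAt_id θ).mul (Real.hasDerivAt_cos θ))
    exact h.congr_deriv (by simp only [id_eq]; ring)
  have h2 := h1.const_mul (2 / Real.pi)
  exact h2

lemma curveY_hasDeriv (θ : ℝ) :
    HasDerivAt curveY ((2 / Real.pi) * (θ * Real.sin θ) - 2 * Real.sin θ) θ := by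
  have h := (curveX_hasDeriv θ).add ((Real.hasDerivAt_cos θ).const_mul 2)
  have : curveY = fun t => curveX t + 2 * Real.cos t := rfl
  rw [this]
  exact h.congr_deriv (by ring)

lemma curveX_mono : StrictMonoOn curveX (Set.Icc 0 Real.pi) := by
  have hc : ContinuousOn curveX (Set.Icc 0 Real.pi) :=
    fun θ _ => ((curveX_hasDeriv θ).continuousAt).continuousWithinAt
  apply strictMonoOn_of_deriv_pos (convex_Icc _ _) hc
  intro x hx
  rw [interior_Icc] at hx
  rw [(curveX_hasDeriv x).deriv]
  have hs : 0 < Real.sin x := Real.sin_pos_of_pos_of_lt_pi hx.1 hx.2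
  have hp : 0 < Real.pi := Real.pi_pos
  exact mul_pos (by positivity) (mul_pos hx.1 hs)

lemma curveY_anti : StrictAntiOn curveY (Set.Icc 0 Real.pi) := by
  have hc : ContinuousOn curveY (Set.Icc 0 Real.pi) :=
    fun θ _ => ((curveY_hasDeriv θ).continuousAt).continuousWithinAt
  apply strictAntiOn_of_deriv_neg (convex_Icc _ _) hc
  intro x hx
  rw [interior_Icc] at hx
  rw [(curveY_hasDeriv x).deriv]
  have hs : 0 < Real.sin x := Real.sin_pos_of_pos_of_lt_pi hx.1 hx.2
  have hp : 0 < Real.pi := Real.pi_pos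
  have h1 : (2 / Real.pi) * x < 2 := by
    rw [div_mul_eq_mul_div, div_lt_iff₀ hp]
    nlinarith [hx.2]
  nlinarith

lemma curveX_zero : curveX 0 = 0 := by simp [curveX]

lemma curveX_pi : curveX Real.pi = 2 := by
  simp [curveX, Real.sin_pi, Real.cos_pi]

lemma curveY_zero : curveY 0 = 2 := by simp [curveY, curveX_zero]

lemma curveY_pi : curveY Real.pi = 0 := by simp [curveY, curveX_pi]

/-- The limit-shape function `ω`, defined on `[0,2]` by the parametric equations
`x = (2/π)(sin θ − θ cos θ)`, `y = x + 2 cos θ`, `θ ∈ [0, π]`, is strictly decreasing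
on `[0,2]`, with `ω(0) = 2` and `ω(2) = 0`. -/
theorem limit_shape_strictAnti (ω : ℝ → ℝ)
    (hω : ∀ x ∈ Set.Icc (0 : ℝ) 2, ∃ θ ∈ Set.Icc (0 : ℝ) Real.pi,
      curveX θ = x ∧ ω x = curveY θ) :
    StrictAntiOn ω (Set.Icc 0 2) ∧ ω 0 = 2 ∧ ω 2 = 0 := by
  have hpi : (0:ℝ) ≤ Real.pi := Real.pi_pos.le
  refine ⟨?_, ?_, ?_⟩
  · intro x1 hx1 x2 hx2 hlt
    obtain ⟨θ1, hθ1, hX1, hY1⟩ := hω x1 hx1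
    obtain ⟨θ2, hθ2, hX2, hY2⟩ := hω x2 hx2
    have hθlt : θ1 < θ2 := by
      rw [← curveX_mono.lt_iff_lt hθ1 hθ2]
      rw [hX1, hX2]; exact hlt
    rw [hY1, hY2]
    exact curveY_anti hθ1 hθ2 hθlt
  · obtain ⟨θ, hθ, hX, hY⟩ := hω 0 (by norm_num)
    have : θ = 0 := by
      apply curveX_mono.injOn hθ (by simp [hpi])
      rw [hX, curveX_zero]
    rw [hY, this, curveY_zero]
  · obtain ⟨θ, hθ, hX, hY⟩ := hω 2 (by norm_num)
    have : θ = Real.pi := by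
      apply curveX_mono.injOn hθ (by simp [hpi])
      rw [hX, curveX_pi]
    rw [hY, this, curveY_pi]
end

section
/- For 0 < |δ| ≤ 1/2 and m ≥ 2 with m|δ| ≥ 1, the sum ∑_{k=2}^m cos(kδ)/k equals −log|δ| + O(1), with the O(1) constant absolute. -/
/-!
Take `δ > 0` (cosine is even) and split the sum at `N = ⌊1/δ⌋`, so that `Nδ ∈ (1/2, 1]`.
For `k ≤ N` we have `cos (kδ) = 1 + O(k²δ²)`, so the head differs from the harmonic sum
`∑_{k=2}^N 1/k = log N + O(1) = -log δ + O(1)` by `O(N²δ²) = O(1)`. The partial sums of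
`cos (kδ)` are real parts of geometric sums of `e^{iδ}`, hence bounded by `π/δ`; Abel summation
against the decreasing weights `1/k` then bounds the tail beyond `N` by `2π/((N+1)δ) ≤ 2π`.
-/

open Finset Real

theorem norm_geom_sum_le_of_norm_le_one {𝕜 : Type*} [NormedDivisionRing 𝕜] {z : 𝕜}
    (hz : ‖z‖ ≤ 1) (hz1 : z ≠ 1) (n : ℕ) :
    ‖∑ i ∈ range n, z ^ i‖ ≤ 2 / ‖z - 1‖ := by
  rw [geom_sum_eq hz1, norm_div]
  gcongr
  calc ‖z ^ n - 1‖ ≤ ‖z‖ ^ n + ‖(1 : 𝕜)‖ := by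
        simpa only [norm_pow] using norm_sub_le (z ^ n) 1
    _ ≤ 2 := by
        rw [norm_one]
        linarith [pow_le_one₀ (norm_nonneg z) hz (n := n)]

theorem abs_sum_range_cos_mul_le {θ : ℝ} (h0 : 0 < θ) (hπ : θ ≤ π) (n : ℕ) :
    |∑ i ∈ range n, cos (i * θ)| ≤ π / θ := by
  set z := Complex.exp (Complex.I * θ)
  have hsum : ∑ i ∈ range n, cos (i * θ) = (∑ i ∈ range n, z ^ i).re := by
    rw [Complex.re_sum]
    refine sum_congr rfl fun i _ => ?_
    rw [← Complex.exp_nat_mul, ← Complex.exp_ofReal_mul_I_re]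
    push_cast
    ring_nf
  have hz1 : 2 * θ / π ≤ ‖z - 1‖ := by
    have hsin := mul_le_sin (x := θ / 2) (by linarith) (by linarith)
    rw [Complex.norm_exp_I_mul_ofReal_sub_one, Real.norm_eq_abs,
      abs_of_nonneg (mul_nonneg zero_le_two (hsin.trans' (by positivity)))]
    calc 2 * θ / π = 2 * (2 / π * (θ / 2)) := by ring
      _ ≤ 2 * sin (θ / 2) := by gcongr
  have hz : ‖z‖ = 1 := by simp [z]
  have hzne : z ≠ 1 := fun h => by
    rw [h, sub_self, norm_zero] at hz1
    linarith [div_pos (mul_pos two_pos h0) pi_pos]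
  calc |∑ i ∈ range n, cos (i * θ)| ≤ ‖∑ i ∈ range n, z ^ i‖ :=
        hsum ▸ Complex.abs_re_le_norm _
    _ ≤ 2 / ‖z - 1‖ := norm_geom_sum_le_of_norm_le_one hz.le hzne n
    _ ≤ 2 / (2 * θ / π) := by gcongr
    _ = π / θ := by field_simp

theorem abs_sum_Ioc_mul_le_of_antitoneOn {f g : ℕ → ℝ} {M : ℝ} {N m : ℕ} (hNm : N < m)
    (hf : AntitoneOn f (Set.Icc (N + 1) m)) (hfm : 0 ≤ f m)
    (hg : ∀ n, |∑ i ∈ range n, g i| ≤ M) :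
    |∑ i ∈ Ioc N m, f i * g i| ≤ 2 * M * f (N + 1) := by
  have hterm : ∀ {c : ℝ}, 0 ≤ c → ∀ n, |c * ∑ i ∈ range n, g i| ≤ c * M := fun hc n => by
    rw [abs_mul, abs_of_nonneg hc]
    exact mul_le_mul_of_nonneg_left (hg n) hc
  have hfN : f m ≤ f (N + 1) := hf ⟨le_rfl, hNm⟩ ⟨hNm, le_rfl⟩ hNm
  have hpiece : ∀ i ∈ Ioc N (m - 1),
      |(f (i + 1) - f i) * ∑ j ∈ range (i + 1), g j| ≤ (f i - f (i + 1)) * M := by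
    intro i hi
    obtain ⟨hNi, him⟩ := mem_Ioc.mp hi
    have hanti : f (i + 1) ≤ f i := hf ⟨hNi, by omega⟩ ⟨by omega, by omega⟩ i.le_succ
    rw [← neg_sub, neg_mul, abs_neg]
    exact hterm (sub_nonneg.mpr hanti) _
  have htele : ∑ i ∈ Ioc N (m - 1), (f i - f (i + 1)) = f (N + 1) - f m := by
    rw [← Ico_add_one_add_one_eq_Ioc, Nat.sub_add_cancel (by omega), ← neg_sub,
      ← sum_Ico_sub f hNm, ← sum_neg_distrib]
    simp
  have hparts := sum_Ioc_by_parts f g hNm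
  simp only [smul_eq_mul] at hparts
  rw [hparts]
  calc _ ≤ |f m * ∑ i ∈ range (m + 1), g i| + |f (N + 1) * ∑ i ∈ range (N + 1), g i|
        + |∑ i ∈ Ioc N (m - 1), (f (i + 1) - f i) * ∑ j ∈ range (i + 1), g j| :=
        (abs_sub _ _).trans (by gcongr; exact abs_sub _ _)
    _ ≤ f m * M + f (N + 1) * M + (f (N + 1) - f m) * M := by
        gcongr
        · exact hterm hfm _
        · exact hterm (hfm.trans hfN) _
        · rw [← htele, sum_mul]
          exact (abs_sum_le_sum_abs _ _).trans (sum_le_sum hpiece)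
    _ = 2 * M * f (N + 1) := by ring

theorem abs_sum_Ioc_cos_mul_div_le {δ : ℝ} (h0 : 0 < δ) (hπ : δ ≤ π) {N m : ℕ} (hNm : N ≤ m) :
    |∑ k ∈ Ioc N m, cos (k * δ) / k| ≤ 2 * π / ((N + 1) * δ) := by
  rcases hNm.eq_or_lt with rfl | hlt
  · simp only [Ioc_self, sum_empty, abs_zero]
    positivity
  have hanti : AntitoneOn (fun k : ℕ => (k : ℝ)⁻¹) (Set.Icc (N + 1) m) :=
    fun a ha _ _ hab =>
      inv_anti₀ (Nat.cast_pos.mpr (by have := ha.1; omega)) (by exact_mod_cast hab)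
  have := abs_sum_Ioc_mul_le_of_antitoneOn hlt hanti (by positivity)
    (abs_sum_range_cos_mul_le h0 hπ)
  simp only [inv_mul_eq_div, Nat.cast_add, Nat.cast_one] at this
  convert this using 1
  field_simp

theorem sum_Ioc_one_sub_cos_mul_div_le (δ : ℝ) (N : ℕ) :
    ∑ k ∈ Ioc 1 N, (1 - cos (k * δ)) / k ≤ (N * δ) ^ 2 / 2 := by
  have hterm : ∀ k ∈ Ioc 1 N, (1 - cos (k * δ)) / k ≤ N * δ ^ 2 / 2 := by
    intro k hk
    have hkN : (k : ℝ) ≤ N := by exact_mod_cast (mem_Ioc.mp hk).2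
    calc (1 - cos (k * δ)) / k ≤ (k * δ) ^ 2 / 2 / k := by
          gcongr
          linarith [one_sub_sq_div_two_le_cos (x := k * δ)]
      _ = k * δ ^ 2 / 2 := by field_simp
      _ ≤ N * δ ^ 2 / 2 := by gcongr
  calc ∑ k ∈ Ioc 1 N, (1 - cos (k * δ)) / k ≤ #(Ioc 1 N) • (N * δ ^ 2 / 2) :=
        sum_le_card_nsmul _ _ _ hterm
    _ = ((N - 1 : ℕ) : ℝ) * (N * δ ^ 2 / 2) := by rw [Nat.card_Ioc, nsmul_eq_mul]
    _ ≤ N * (N * δ ^ 2 / 2) := by gcongr; exact N.sub_le 1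
    _ = (N * δ) ^ 2 / 2 := by ring

theorem abs_sum_Ioc_one_inv_sub_log_le {N : ℕ} (hN : 1 ≤ N) :
    |∑ k ∈ Ioc 1 N, (k : ℝ)⁻¹ - log N| ≤ 1 := by
  have hharm : ∑ k ∈ Ioc 1 N, (k : ℝ)⁻¹ = harmonic N - 1 := by
    rw [harmonic_eq_sum_Icc, ← sum_Ioc_add_eq_sum_Icc hN]
    push_cast
    ring
  have hlow := log_add_one_le_harmonic N
  have hup := harmonic_le_one_add_log N
  have hmono : log N ≤ log ↑(N + 1) := log_le_log (by positivity) (by push_cast; linarith)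
  rw [hharm, abs_le]
  constructor <;> linarith

theorem abs_sum_Ioc_cos_mul_div_add_log_le {δ : ℝ} (h0 : 0 < δ) (h1 : δ ≤ 1) {m : ℕ}
    (hm : 1 ≤ m * δ) :
    |∑ k ∈ Ioc 1 m, cos (k * δ) / k + log δ| ≤ 9 := by
  set N := ⌊δ⁻¹⌋₊
  have hNδ : N * δ ≤ 1 := by
    rw [← le_div_iff₀ h0, one_div]
    exact Nat.floor_le (inv_nonneg.mpr h0.le)
  have hN1δ : 1 < (N + 1) * δ := by
    rw [← div_lt_iff₀ h0, one_div]
    exact Nat.lt_floor_add_one _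
  have hN : 1 ≤ N := Nat.le_floor (by rw [Nat.cast_one]; exact one_le_inv_iff₀.mpr ⟨h0, h1⟩)
  have hNm : N ≤ m := by exact_mod_cast le_of_mul_le_mul_right (hNδ.trans hm) h0
  have hNpos : (0 : ℝ) < N := Nat.cast_pos.mpr hN
  have hsplit : ∑ k ∈ Ioc 1 m, cos (k * δ) / k + log δ
      = -∑ k ∈ Ioc 1 N, (1 - cos (k * δ)) / k + (∑ k ∈ Ioc 1 N, (k : ℝ)⁻¹ - log N)
        + log (N * δ) + ∑ k ∈ Ioc N m, cos (k * δ) / k := by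
    have hhead_eq : ∑ k ∈ Ioc 1 N, cos (k * δ) / k
        = ∑ k ∈ Ioc 1 N, (k : ℝ)⁻¹ - ∑ k ∈ Ioc 1 N, (1 - cos (k * δ)) / k := by
      rw [← sum_sub_distrib]
      exact sum_congr rfl fun k _ => by ring
    rw [← sum_Ioc_consecutive _ hN hNm, hhead_eq, log_mul hNpos.ne' h0.ne']
    ring
  have hhead : ∑ k ∈ Ioc 1 N, (1 - cos (k * δ)) / k ≤ 1 / 2 :=
    (sum_Ioc_one_sub_cos_mul_div_le δ N).trans
      (by nlinarith [pow_le_one₀ (by positivity) hNδ (n := 2)])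
  have hhead0 : 0 ≤ ∑ k ∈ Ioc 1 N, (1 - cos (k * δ)) / k :=
    sum_nonneg fun k _ => div_nonneg (sub_nonneg.mpr (cos_le_one _)) k.cast_nonneg
  have hharm := abs_sum_Ioc_one_inv_sub_log_le hN
  have hlog_up : log (N * δ) ≤ 0 := log_nonpos (by positivity) hNδ
  have hlog_low : -log 2 ≤ log (N * δ) := by
    rw [← log_inv]
    have : (1 : ℝ) ≤ N := by exact_mod_cast hN
    exact log_le_log (by norm_num) (by nlinarith)
  have htail := (abs_sum_Ioc_cos_mul_div_le h0 (by linarith [pi_gt_three]) hNm).trans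
    (div_le_self (by positivity) hN1δ.le)
  have := log_two_lt_d9
  have := pi_lt_d2
  rw [hsplit, abs_le]
  rw [abs_le] at hharm htail
  constructor <;> linarith

/-- Logarithmic asymptotics of the cosine sum: for `0 < |δ| ≤ 1/2` and `m ≥ 2` with
`m|δ| ≥ 1`, `∑_{k=2}^m cos(kδ)/k = −log|δ| + O(1)`, with an absolute `O(1)` constant. -/
theorem cosine_sum_log_asymptotics :
    ∃ C : ℝ, 0 < C ∧ ∀ (δ : ℝ) (m : ℕ), 0 < abs δ → abs δ ≤ 1 / 2 → 2 ≤ m →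
      1 ≤ (m : ℝ) * abs δ →
      abs ((∑ k ∈ Finset.Icc 2 m, Real.cos (k * δ) / k) + Real.log (abs δ)) ≤ C := by
  refine ⟨9, by norm_num, fun δ m hδ hδ_le _ hmδ => ?_⟩
  have hcos : ∀ k : ℕ, cos (k * δ) = cos (k * |δ|) := fun k => by
    rw [← cos_abs (k * δ), abs_mul, Nat.abs_cast]
  simp_rw [hcos, show Icc 2 m = Ioc 1 m from Icc_add_one_left_eq_Ioc 1 m]
  exact abs_sum_Ioc_cos_mul_div_add_log_le hδ (by linarith) hmδ
end
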